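/- arXiv:math/0608159 — 4 statements merged into one kernel-verified Lean document; each statement's English description precedes it below -/
import Mathlib

section
/- Let (R_m) be a strictly increasing sequence of natural numbers, a(j) = ρ_m if j = R_m for some m and a(j) = 1 otherwise, and b ≡ 0, where ρ_m > 1 for all m. Let (β_m) be a sequence with β_m ≥ ρ_m and β_m → ∞, and set A_m = ∏_{l=1}^m β_l². If for some ε > 0, limsup_{m→∞} (R_{m+1} − R_m)/A_m^{1+ε} > 0, then for every E ∈ (−2,2) the only square-summable solution of the eigenvalue equation at E is the zero solution (in particular, no E ∈ (−2,2) is an eigenvalue of the Jacobi matrix J(a,b), so its spectral measures are continuous on (−2,2)). -/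
/-!
For `|E| < 2` the form `Q(x, y) = x² + y² - E x y` is comparable to `x² + y²` and is conserved
by the free recurrence `u (j + 1) + u (j - 1) = E u j`. At a site next to a bump it can drop by at
most a factor `K a²`, with `K` depending only on `E`, so before `R (m + 1)` the energy
`Q(u n, u (n + 1))` stays above `Q(u 0, u 1) / (K^{2m} A m)`. Summing over the gap
`[R m, R (m + 1))` bounds its length by `K^{2m} A m ‖u‖² / Q(u 0, u 1)`. As `β → ∞`, `A m ^ ε`
outgrows every exponential, which contradicts the gap condition unless `Q(u 0, u 1) = 0`, and then
`u = 0` by the recurrence.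
-/

open Filter Finset

def IsJacobiSolution (a : ℕ → ℝ) (E : ℝ) (u : ℕ → ℝ) : Prop :=
  ∀ j : ℕ, 1 ≤ j → a j * u (j + 1) + a (j - 1) * u (j - 1) = E * u j

def energyForm (E x y : ℝ) : ℝ := x ^ 2 + y ^ 2 - E * x * y

noncomputable def energyStepConst (E : ℝ) : ℝ := 18 / (1 - |E| / 2)

noncomputable def bumpWeight (E t : ℝ) : ℝ := if t = 1 then 1 else energyStepConst E

section energyForm

variable {E : ℝ}

theorem abs_mul_mul_le (E x y : ℝ) : |E * x * y| ≤ |E| * (x ^ 2 + y ^ 2) / 2 := by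
  rw [abs_mul, abs_mul]
  nlinarith [sq_nonneg (|x| - |y|), sq_abs x, sq_abs y, abs_nonneg E, abs_nonneg x, abs_nonneg y]

theorem mul_sq_add_sq_le_energyForm (E x y : ℝ) :
    (1 - |E| / 2) * (x ^ 2 + y ^ 2) ≤ energyForm E x y := by
  have := le_abs_self (E * x * y)
  have := abs_mul_mul_le E x y
  unfold energyForm
  linarith

theorem energyForm_le_two_mul (hE : |E| ≤ 2) (x y : ℝ) :
    energyForm E x y ≤ 2 * (x ^ 2 + y ^ 2) := by
  have := neg_abs_le (E * x * y)
  have := abs_mul_mul_le E x y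
  unfold energyForm
  nlinarith [sq_nonneg x, sq_nonneg y]

theorem energyForm_nonneg (hE : |E| ≤ 2) (x y : ℝ) : 0 ≤ energyForm E x y :=
  le_trans (by nlinarith [sq_nonneg x, sq_nonneg y]) (mul_sq_add_sq_le_energyForm E x y)

theorem eq_zero_of_energyForm_nonpos (hE : |E| < 2) {x y : ℝ} (h : energyForm E x y ≤ 0) :
    x = 0 ∧ y = 0 := by
  have := mul_sq_add_sq_le_energyForm E x y
  have hsum : x ^ 2 + y ^ 2 = 0 :=
    le_antisymm (by nlinarith [sq_nonneg x, sq_nonneg y]) (by positivity)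
  rwa [add_eq_zero_iff_of_nonneg (sq_nonneg x) (sq_nonneg y), sq_eq_zero_iff,
    sq_eq_zero_iff] at hsum

theorem energyForm_eq_of_add_eq {x y z : ℝ} (h : x + z = E * y) :
    energyForm E x y = energyForm E y z := by
  unfold energyForm
  linear_combination (x - z) * h

theorem one_le_energyStepConst (hE : |E| < 2) : 1 ≤ energyStepConst E := by
  rw [energyStepConst, le_div_iff₀ (by linarith)]
  linarith [abs_nonneg E]

theorem energyForm_le_energyStepConst_mul {a a' x y z : ℝ} (hE : |E| < 2) (ha : 1 ≤ a)
    (ha' : 1 ≤ a') (h : a * x + a' * z = E * y) :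
    energyForm E x y ≤ energyStepConst E * a' ^ 2 * energyForm E y z := by
  have hδ : 0 < 1 - |E| / 2 := by linarith
  have hE2 : E ^ 2 ≤ 4 := by nlinarith [sq_abs E, abs_nonneg E]
  have hx : x ^ 2 ≤ 2 * E ^ 2 * y ^ 2 + 2 * a' ^ 2 * z ^ 2 := by
    have hax : x ^ 2 ≤ (a * x) ^ 2 := by
      rw [mul_pow]; exact le_mul_of_one_le_left (sq_nonneg x) (one_le_pow₀ ha)
    rw [show a * x = E * y - a' * z by linarith] at hax
    nlinarith [sq_nonneg (E * y + a' * z)]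
  calc energyForm E x y ≤ 2 * (x ^ 2 + y ^ 2) := energyForm_le_two_mul hE.le x y
    _ ≤ 18 * a' ^ 2 * (y ^ 2 + z ^ 2) := by
      nlinarith [mul_le_mul_of_nonneg_right hE2 (sq_nonneg y), sq_nonneg y, sq_nonneg z,
        mul_nonneg (by nlinarith : 0 ≤ a' ^ 2 - 1) (sq_nonneg y)]
    _ = energyStepConst E * a' ^ 2 * ((1 - |E| / 2) * (y ^ 2 + z ^ 2)) := by
      have : 2 - |E| ≠ 0 := by linarith
      rw [energyStepConst]
      field_simp
    _ ≤ energyStepConst E * a' ^ 2 * energyForm E y z := by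
      gcongr
      · exact mul_nonneg (zero_le_one.trans (one_le_energyStepConst hE)) (sq_nonneg a')
      · exact mul_sq_add_sq_le_energyForm E y z

theorem one_le_bumpWeight (hE : |E| < 2) (t : ℝ) : 1 ≤ bumpWeight E t := by
  unfold bumpWeight
  split_ifs
  exacts [le_rfl, one_le_energyStepConst hE]

/-- Only `a'` enters squared, so that along a chain each bump is charged its `ρ ^ 2` once and
`energyStepConst E` at most twice. -/
theorem energyForm_le_bumpWeight_mul {a a' x y z : ℝ} (hE : |E| < 2) (ha : 1 ≤ a) (ha' : 1 ≤ a')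
    (h : a * x + a' * z = E * y) :
    energyForm E x y ≤ bumpWeight E a * (bumpWeight E a' * a' ^ 2) * energyForm E y z := by
  by_cases hfree : a = 1 ∧ a' = 1
  · obtain ⟨rfl, rfl⟩ := hfree
    simp only [bumpWeight, if_true, one_pow, mul_one, one_mul]
    exact (energyForm_eq_of_add_eq (by linarith)).le
  have hK : energyStepConst E ≤ bumpWeight E a * bumpWeight E a' := by
    rcases not_and_or.1 hfree with h1 | h1
    · rw [bumpWeight, if_neg h1]
      exact le_mul_of_one_le_right (by linarith [one_le_energyStepConst hE])
        (one_le_bumpWeight hE a')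
    · rw [show bumpWeight E a' = energyStepConst E from if_neg h1]
      exact le_mul_of_one_le_left (by linarith [one_le_energyStepConst hE])
        (one_le_bumpWeight hE a)
  calc energyForm E x y ≤ energyStepConst E * a' ^ 2 * energyForm E y z :=
        energyForm_le_energyStepConst_mul hE ha ha' h
    _ ≤ bumpWeight E a * bumpWeight E a' * a' ^ 2 * energyForm E y z := by
      gcongr
      exact energyForm_nonneg hE.le y z
    _ = _ := by ring

theorem summable_energyForm {E : ℝ} {u : ℕ → ℝ} (hE : |E| ≤ 2)
    (hu : Summable fun j => u (j + 1) ^ 2) : Summable fun j => energyForm E (u j) (u (j + 1)) :=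
  .of_nonneg_of_le (fun _ => energyForm_nonneg hE _ _) (fun _ => energyForm_le_two_mul hE _ _)
    ((((summable_nat_add_iff 1).1 hu).add hu).mul_left 2)

end energyForm

theorem le_prod_range_mul_of_le_mul {q g : ℕ → ℝ} (hg : ∀ i, 0 ≤ g i)
    (h : ∀ i, q i ≤ g i * q (i + 1)) (n : ℕ) : q 0 ≤ (∏ i ∈ range n, g i) * q n := by
  induction n with
  | zero => simp
  | succ n ih =>
    calc q 0 ≤ (∏ i ∈ range n, g i) * q n := ih
      _ ≤ (∏ i ∈ range n, g i) * (g n * q (n + 1)) := by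
        gcongr
        · exact prod_nonneg fun i _ => hg i
        · exact h n
      _ = (∏ i ∈ range (n + 1), g i) * q (n + 1) := by rw [prod_range_succ, mul_assoc]

namespace IsJacobiSolution

variable {a : ℕ → ℝ} {E : ℝ} {u : ℕ → ℝ}

theorem step (hsol : IsJacobiSolution a E u) (i : ℕ) :
    a i * u i + a (i + 1) * u (i + 2) = E * u (i + 1) := by
  have := hsol (i + 1) (Nat.le_add_left 1 i)
  rw [Nat.add_sub_cancel] at this
  linarith

theorem eq_zero (hsol : IsJacobiSolution a E u) (ha : ∀ j, a j ≠ 0) (h0 : u 0 = 0)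
    (h1 : u 1 = 0) (j : ℕ) : u j = 0 := by
  suffices ∀ j, u j = 0 ∧ u (j + 1) = 0 from (this j).1
  intro j
  induction j with
  | zero => exact ⟨h0, h1⟩
  | succ j ih =>
    refine ⟨ih.2, ?_⟩
    have := hsol.step j
    rw [ih.1, ih.2, mul_zero, mul_zero, zero_add] at this
    exact (mul_eq_zero.1 this).resolve_left (ha (j + 1))

theorem energyForm_zero_le (hsol : IsJacobiSolution a E u) (ha : ∀ j, 1 ≤ a j) (hE : |E| < 2)
    (n : ℕ) :
    energyForm E (u 0) (u 1) ≤ (∏ j ∈ range (n + 1), bumpWeight E (a j)) *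
      (∏ j ∈ range (n + 1), bumpWeight E (a j) * a j ^ 2) * energyForm E (u n) (u (n + 1)) := by
  have hw : ∀ j, 1 ≤ bumpWeight E (a j) := fun j => one_le_bumpWeight hE (a j)
  have hwa : ∀ j, 1 ≤ bumpWeight E (a j) * a j ^ 2 := fun j =>
    one_le_mul_of_one_le_of_one_le (hw j) (one_le_pow₀ (ha j))
  have hchain := le_prod_range_mul_of_le_mul (q := fun j => energyForm E (u j) (u (j + 1)))
    (fun i => mul_nonneg (zero_le_one.trans (hw i)) (zero_le_one.trans (hwa (i + 1))))
    (fun i => energyForm_le_bumpWeight_mul hE (ha i) (ha (i + 1)) (hsol.step i)) n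
  rw [prod_mul_distrib] at hchain
  refine hchain.trans <|
    mul_le_mul_of_nonneg_right (mul_le_mul ?_ ?_ ?_ ?_) (energyForm_nonneg hE.le _ _)
  · exact prod_le_prod_of_subset_of_one_le (range_subset_range.2 n.le_succ)
      (fun j _ => zero_le_one.trans (hw j)) (fun j _ _ => hw j)
  · rw [prod_range_succ' (fun j => bumpWeight E (a j) * a j ^ 2)]
    exact le_mul_of_one_le_right (prod_nonneg fun j _ => zero_le_one.trans (hwa (j + 1))) (hwa 0)
  · exact prod_nonneg fun j _ => zero_le_one.trans (hwa (j + 1))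
  · exact prod_nonneg fun j _ => zero_le_one.trans (hw j)

end IsJacobiSolution

section SparseBumps

variable {R : ℕ → ℕ} {ρ a : ℕ → ℝ}

theorem one_le_of_bumps (hρ : ∀ m, 1 ≤ m → 1 < ρ m) (haR : ∀ m, 1 ≤ m → a (R m) = ρ m)
    (ha1 : ∀ j, (∀ m, 1 ≤ m → R m ≠ j) → a j = 1) (j : ℕ) : 1 ≤ a j := by
  by_cases h : ∃ m, 1 ≤ m ∧ R m = j
  · obtain ⟨m, hm, rfl⟩ := h
    exact (haR m hm).symm ▸ (hρ m hm).le
  · simp only [not_exists, not_and] at h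
    exact (ha1 j h).ge

theorem prod_range_le_prod_bumps (hR : StrictMono R) (haR : ∀ m, 1 ≤ m → a (R m) = ρ m)
    (ha1 : ∀ j, (∀ m, 1 ≤ m → R m ≠ j) → a j = 1) {f : ℝ → ℝ} (hf1 : f 1 = 1) {m n : ℕ}
    (hf : ∀ l ∈ Icc 1 m, 1 ≤ f (ρ l)) (hn : n < R (m + 1)) :
    ∏ j ∈ range (n + 1), f (a j) ≤ ∏ l ∈ Icc 1 m, f (ρ l) := by
  set bumps := (Icc 1 m).filter (fun l => R l ≤ n)
  have hsub : bumps.image R ⊆ range (n + 1) := by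
    intro j hj
    obtain ⟨l, hl, rfl⟩ := mem_image.1 hj
    exact mem_range.2 (Nat.lt_succ_of_le (mem_filter.1 hl).2)
  have hfree : ∀ j ∈ range (n + 1), j ∉ bumps.image R → f (a j) = 1 := by
    intro j hj hjb
    have hjn := mem_range.1 hj
    suffices a j = 1 by rw [this, hf1]
    refine ha1 j fun l hl hRl => hjb (mem_image.2 ⟨l, mem_filter.2 ⟨mem_Icc.2 ⟨hl, ?_⟩, ?_⟩, hRl⟩)
    · exact Nat.lt_succ_iff.1 (hR.lt_iff_lt.1 (show R l < R (m + 1) by omega))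
    · omega
  calc ∏ j ∈ range (n + 1), f (a j) = ∏ j ∈ bumps.image R, f (a j) := (prod_subset hsub hfree).symm
    _ = ∏ l ∈ bumps, f (ρ l) := by
      rw [prod_image fun x _ y _ h => hR.injective h]
      exact prod_congr rfl fun l hl => by rw [haR l (mem_Icc.1 (mem_filter.1 hl).1).1]
    _ ≤ ∏ l ∈ Icc 1 m, f (ρ l) :=
      prod_le_prod_of_subset_of_one_le (filter_subset _ _)
        (fun l hl => zero_le_one.trans (hf l (mem_filter.1 hl).1)) (fun l hl _ => hf l hl)

end SparseBumps

theorem tendsto_prod_Icc_atTop {γ : ℕ → ℝ} (hpos : ∀ l, 1 ≤ l → 0 < γ l)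
    (h : Tendsto γ atTop atTop) : Tendsto (fun m => ∏ l ∈ Icc 1 m, γ l) atTop atTop := by
  obtain ⟨M, hM⟩ := eventually_atTop.1 (h.eventually_ge_atTop 2)
  refine (tendsto_add_atTop_iff_nat M).1 (tendsto_atTop_of_geom_le ?_ one_lt_two fun k => ?_)
  · exact prod_pos fun l hl => hpos l (mem_Icc.1 hl).1
  · rw [Nat.add_right_comm, prod_Icc_succ_top (by omega), mul_comm]
    gcongr
    · exact (prod_pos fun l hl => hpos l (mem_Icc.1 hl).1).le
    · exact hM _ (by omega)

theorem tendsto_prod_rpow_div_pow_atTop {γ : ℕ → ℝ} (hpos : ∀ l, 1 ≤ l → 0 < γ l)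
    (h : Tendsto γ atTop atTop) {ε : ℝ} (hε : 0 < ε) {L : ℝ} (hL : 0 < L) :
    Tendsto (fun m => (∏ l ∈ Icc 1 m, γ l) ^ ε / L ^ m) atTop atTop := by
  have hprod : Tendsto (fun m => ∏ l ∈ Icc 1 m, γ l ^ ε / L) atTop atTop :=
    tendsto_prod_Icc_atTop (fun l hl => by have := hpos l hl; positivity)
      (((tendsto_rpow_atTop hε).comp h).atTop_div_const hL)
  refine hprod.congr fun m => ?_
  rw [prod_div_distrib, prod_const, Nat.card_Icc, Nat.add_sub_cancel,
    Real.finsetProd_rpow _ _ fun l hl => (hpos l (mem_Icc.1 hl).1).le]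

theorem card_mul_le_mul_tsum {q : ℕ → ℝ} (hq : Summable q) (hq0 : ∀ n, 0 ≤ q n) {s : Finset ℕ}
    {x B : ℝ} (hB : 0 ≤ B) (h : ∀ n ∈ s, x ≤ B * q n) : s.card * x ≤ B * ∑' n, q n :=
  calc s.card * x ≤ ∑ n ∈ s, B * q n := by
        rw [← nsmul_eq_mul]; exact card_nsmul_le_sum s _ x h
    _ = B * ∑ n ∈ s, q n := (mul_sum s q B).symm
    _ ≤ B * ∑' n, q n := by gcongr; exact hq.sum_le_tsum s fun n _ => hq0 n

theorem IsJacobiSolution.energyForm_zero_le_of_lt_bump {R : ℕ → ℕ} {ρ β a u : ℕ → ℝ} {E : ℝ}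
    (hsol : IsJacobiSolution a E u) (hE : |E| < 2) (hR : StrictMono R)
    (hρ : ∀ m, 1 ≤ m → 1 < ρ m) (hβρ : ∀ m, 1 ≤ m → ρ m ≤ β m)
    (haR : ∀ m, 1 ≤ m → a (R m) = ρ m) (ha1 : ∀ j, (∀ m, 1 ≤ m → R m ≠ j) → a j = 1)
    {m n : ℕ} (hn : n < R (m + 1)) :
    energyForm E (u 0) (u 1) ≤
      (energyStepConst E ^ 2) ^ m * (∏ l ∈ Icc 1 m, β l ^ 2) * energyForm E (u n) (u (n + 1)) := by
  set K := energyStepConst E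
  have hK : 1 ≤ K := one_le_energyStepConst hE
  have hwρ : ∀ l ∈ Icc 1 m, bumpWeight E (ρ l) = K := fun l hl =>
    if_neg (hρ l (mem_Icc.1 hl).1).ne'
  have hcard : (Icc 1 m).card = m := by rw [Nat.card_Icc, Nat.add_sub_cancel]
  have hweights : ∏ j ∈ range (n + 1), bumpWeight E (a j) ≤ K ^ m :=
    calc _ ≤ ∏ l ∈ Icc 1 m, bumpWeight E (ρ l) :=
          prod_range_le_prod_bumps (f := bumpWeight E) hR haR ha1 (if_pos rfl)
            (fun l _ => one_le_bumpWeight hE _) hn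
      _ = K ^ m := by rw [prod_congr rfl hwρ, prod_const, hcard]
  have hbumps :
      ∏ j ∈ range (n + 1), bumpWeight E (a j) * a j ^ 2 ≤ K ^ m * ∏ l ∈ Icc 1 m, β l ^ 2 :=
    calc _ ≤ ∏ l ∈ Icc 1 m, bumpWeight E (ρ l) * ρ l ^ 2 :=
          prod_range_le_prod_bumps (f := fun t => bumpWeight E t * t ^ 2) hR haR ha1
            (by simp [bumpWeight]) (fun l hl => one_le_mul_of_one_le_of_one_le
              (one_le_bumpWeight hE _) (one_le_pow₀ (hρ l (mem_Icc.1 hl).1).le)) hn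
      _ ≤ ∏ l ∈ Icc 1 m, K * β l ^ 2 := by
          refine prod_le_prod (fun l _ => mul_nonneg (zero_le_one.trans (one_le_bumpWeight hE _))
            (sq_nonneg _)) fun l hl => ?_
          have hl1 := (mem_Icc.1 hl).1
          rw [hwρ l hl]
          gcongr
          exacts [(zero_lt_one.trans (hρ l hl1)).le, hβρ l hl1]
      _ = K ^ m * ∏ l ∈ Icc 1 m, β l ^ 2 := by rw [prod_mul_distrib, prod_const, hcard]
  have ha := one_le_of_bumps hρ haR ha1
  calc _ ≤ _ := hsol.energyForm_zero_le ha hE n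
    _ ≤ K ^ m * (K ^ m * ∏ l ∈ Icc 1 m, β l ^ 2) * energyForm E (u n) (u (n + 1)) := by
      gcongr
      · exact energyForm_nonneg hE.le _ _
      · exact prod_nonneg fun j _ =>
          mul_nonneg (zero_le_one.trans (one_le_bumpWeight hE _)) (sq_nonneg _)
    _ = _ := by ring

theorem no_eigenvalues_of_sparse_bumps_general
    (R : ℕ → ℕ) (hmono : StrictMono R)
    (ρ β : ℕ → ℝ)
    (hρ : ∀ m, 1 ≤ m → 1 < ρ m)
    (hβρ : ∀ m, 1 ≤ m → ρ m ≤ β m)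
    (hβtop : Tendsto β atTop atTop)
    (A : ℕ → ℝ) (hA : ∀ m, A m = ∏ l ∈ Finset.Icc 1 m, (β l) ^ 2)
    (ε : ℝ) (hε : 0 < ε)
    -- limsup_m (R_{m+1} - R_m) / A_m^{1+ε} > 0
    (hlimsup : ∃ c : ℝ, 0 < c ∧
      ∃ᶠ m in atTop, c ≤ ((R (m + 1) : ℝ) - (R m : ℝ)) / (A m) ^ (1 + ε))
    (a : ℕ → ℝ)
    (haR : ∀ m, 1 ≤ m → a (R m) = ρ m)
    (ha1 : ∀ j, (∀ m, 1 ≤ m → R m ≠ j) → a j = 1)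
    (E : ℝ) (hE : E ∈ Set.Ioo (-2 : ℝ) 2)
    (u : ℕ → ℝ)
    -- u solves the eigenvalue equation (b ≡ 0) at E
    (hsol : ∀ j : ℕ, 1 ≤ j → a j * u (j + 1) + a (j - 1) * u (j - 1) = E * u j)
    -- u is square-summable
    (hsq : Summable fun j : ℕ => u (j + 1) ^ 2) :
    ∀ j, u j = 0 := by
  obtain ⟨c, hc, hfreq⟩ := hlimsup
  have hE' : |E| < 2 := abs_lt.2 hE
  have hβ : ∀ l, 1 ≤ l → 0 < β l := fun l hl => by linarith [hρ l hl, hβρ l hl]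
  have hA0 : ∀ m, 0 < A m := fun m => by
    rw [hA m]; exact prod_pos fun l hl => pow_pos (hβ l (mem_Icc.1 hl).1) 2
  set L := energyStepConst E ^ 2
  have hL : 0 < L := pow_pos (zero_lt_one.trans_le (one_le_energyStepConst hE')) 2
  set q₀ := energyForm E (u 0) (u 1)
  set S := ∑' j, energyForm E (u j) (u (j + 1))
  have hgap (m : ℕ) : ((R (m + 1) : ℝ) - R m) * q₀ ≤ L ^ m * A m * S := by
    have := card_mul_le_mul_tsum (summable_energyForm hE'.le hsq)
      (fun n => energyForm_nonneg hE'.le _ _) (s := Ico (R m) (R (m + 1))) (B := L ^ m * A m)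
      (mul_pos (pow_pos hL m) (hA0 m)).le
      fun n hn => by
        rw [hA m]
        exact IsJacobiSolution.energyForm_zero_le_of_lt_bump hsol hE' hmono hρ hβρ haR ha1
          (mem_Ico.1 hn).2
    rwa [Nat.card_Ico, Nat.cast_sub (hmono m.lt_succ_self).le] at this
  have hgrowth : Tendsto (fun m => A m ^ ε / L ^ m) atTop atTop := by
    simp only [hA]
    exact tendsto_prod_rpow_div_pow_atTop (fun l hl => pow_pos (hβ l hl) 2)
      ((tendsto_pow_atTop two_ne_zero).comp hβtop) hε hL
  have hq₀ : q₀ ≤ 0 := by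
    by_contra! hpos
    obtain ⟨m, hcm, hm⟩ :=
      (hfreq.and_eventually (hgrowth.eventually_gt_atTop (S / (c * q₀)))).exists
    rw [le_div_iff₀ (Real.rpow_pos_of_pos (hA0 m) _),
      Real.rpow_one_add' (hA0 m).le (by positivity)] at hcm
    rw [div_lt_div_iff₀ (by positivity) (by positivity)] at hm
    nlinarith [hgap m, mul_le_mul_of_nonneg_right hcm hpos.le, mul_lt_mul_of_pos_left hm (hA0 m)]
  obtain ⟨h0, h1⟩ := eq_zero_of_energyForm_nonpos hE' hq₀
  exact IsJacobiSolution.eq_zero hsol (fun j => (zero_lt_one.trans_le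
    (one_le_of_bumps hρ haR ha1 j)).ne') h0 h1

/-- Lemma: sufficiently sparse bumps imply no square-summable solutions in
`(-2,2)`, hence continuity of spectral measures there: with `a(j) = ρ_m > 1` at `j = R_m`
(`m ≥ 1`) and `a(j) = 1` otherwise, `b ≡ 0`, `β_m ≥ ρ_m`, `β_m → ∞`,
`A_m = ∏_{l=1}^m β_l²`, if `limsup_m (R_{m+1} - R_m)/A_m^{1+ε} > 0` for some `ε > 0`, then
for every `E ∈ (-2,2)` the only square-summable solution of the eigenvalue equation at `E`
is the zero solution. -/
theorem no_eigenvalues_of_sparse_bumps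
    (R : ℕ → ℕ) (hmono : StrictMono R) (hR1 : ∀ m, 1 ≤ m → 1 ≤ R m)
    (ρ β : ℕ → ℝ)
    (hρ : ∀ m, 1 ≤ m → 1 < ρ m)
    (hβρ : ∀ m, 1 ≤ m → ρ m ≤ β m)
    (hβtop : Tendsto β atTop atTop)
    (A : ℕ → ℝ) (hA : ∀ m, A m = ∏ l ∈ Finset.Icc 1 m, (β l) ^ 2)
    (ε : ℝ) (hε : 0 < ε)
    -- limsup_m (R_{m+1} - R_m) / A_m^{1+ε} > 0
    (hlimsup : ∃ c : ℝ, 0 < c ∧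
      ∃ᶠ m in atTop, c ≤ ((R (m + 1) : ℝ) - (R m : ℝ)) / (A m) ^ (1 + ε))
    (a : ℕ → ℝ) (ha0 : a 0 = 1)
    (haR : ∀ m, 1 ≤ m → a (R m) = ρ m)
    (ha1 : ∀ j, (∀ m, 1 ≤ m → R m ≠ j) → a j = 1)
    (E : ℝ) (hE : E ∈ Set.Ioo (-2 : ℝ) 2)
    (u : ℕ → ℝ)
    -- u solves the eigenvalue equation (b ≡ 0) at E
    (hsol : ∀ j : ℕ, 1 ≤ j → a j * u (j + 1) + a (j - 1) * u (j - 1) = E * u j)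
    -- u is square-summable
    (hsq : Summable fun j : ℕ => u (j + 1) ^ 2) :
    ∀ j, u j = 0 :=
  no_eigenvalues_of_sparse_bumps_general R hmono ρ β hρ hβρ hβtop A hA ε hε hlimsup a haR ha1 E hE u
    hsol hsq
end

section
/- Fix a real γ > 1 and an integer k ≥ 2, and for an integer r ≥ 0 let N(r) = Σ_{j=0}^{r} k^{#{n ≥ 1 : ⌊γ^n⌋ < j}} (this is the number of vertices at distance at most r from the root in the SH rooted tree Γ_{k,γ} of type {⌊γ^n⌋, k}, whose n-th branching occurs at generation ⌊γ^n⌋). Then the limit lim_{r→∞} log(N(r))/log(r) exists and equals log(γk)/log(γ); in particular limsup and liminf of log(N(r))/log(r) coincide and equal log(γk)/log(γ). -/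
open Filter Topology Real Finset

/-! The `n`-th branching lies above generation `j` iff `n < logb γ j`, so the number `m j` of
branchings before generation `j` satisfies `logb γ j - 1 ≤ m j ≤ logb γ j`: generation `j` has
between `j ^ α / k` and `j ^ α` vertices, `α = logb γ k`. As the generation sizes increase, the
second half of the ball of radius `r` gives `(r / 2) ^ (1 + α) / k ≤ N(r) ≤ (r + 1) r ^ α`, hence
`log N(r) = (1 + α) log r + O(1)`, and `1 + α = logb γ (γ k)`. -/

lemma tendsto_div_log_of_abs_sub_mul_log_le {f : ℕ → ℝ} {L C : ℝ}
    (h : ∀ᶠ r : ℕ in atTop, |f r - L * log r| ≤ C) :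
    Tendsto (fun r : ℕ => f r / log r) atTop (𝓝 L) := by
  have hbounded : (fun r : ℕ => f r - L * log r) =O[atTop] (fun _ => (1 : ℝ)) :=
    Asymptotics.IsBigO.of_bound C (h.mono fun r hr => by simpa using hr)
  have hsmall := hbounded.trans_isLittleO
    (isLittleO_const_log_atTop.comp_tendsto tendsto_natCast_atTop_atTop)
  have hlim := hsmall.tendsto_div_nhds_zero.const_add L
  rw [add_zero] at hlim
  refine hlim.congr' ?_
  filter_upwards [(tendsto_log_atTop.comp tendsto_natCast_atTop_atTop).eventually_gt_atTop 0]
    with r hr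
  simp only [Function.comp_apply] at hr ⊢
  field_simp
  ring

lemma floor_pow_lt_iff_lt_logb {γ : ℝ} (hγ : 1 < γ) (n j : ℕ) :
    ⌊γ ^ n⌋₊ < j ↔ (n : ℝ) < logb γ j := by
  rcases j.eq_zero_or_pos with rfl | hj
  · simp
  · rw [Nat.floor_lt (by positivity), lt_logb_iff_rpow_lt hγ (by exact_mod_cast hj),
      rpow_natCast]

lemma ncard_setOf_one_le_and_lt (x : ℝ) :
    {n : ℕ | 1 ≤ n ∧ (n : ℝ) < x}.ncard = ⌈x⌉₊ - 1 := by
  have hIco : {n : ℕ | 1 ≤ n ∧ (n : ℝ) < x} = Finset.Ico 1 ⌈x⌉₊ := by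
    ext n
    simp [Nat.lt_ceil]
  rw [hIco, Set.ncard_coe_finset, Nat.card_Ico]

lemma cast_ceil_sub_one_le {x : ℝ} (hx : 0 ≤ x) : ((⌈x⌉₊ - 1 : ℕ) : ℝ) ≤ x := by
  rcases Nat.eq_zero_or_pos ⌈x⌉₊ with h0 | hpos
  · simpa [h0] using hx
  · rw [Nat.cast_sub hpos, Nat.cast_one]
    linarith [Nat.ceil_lt_add_one hx]

lemma sub_one_le_cast_ceil_sub_one (x : ℝ) : x - 1 ≤ ((⌈x⌉₊ - 1 : ℕ) : ℝ) := by
  rcases Nat.eq_zero_or_pos ⌈x⌉₊ with h0 | hpos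
  · simp only [h0, zero_tsub, Nat.cast_zero]
    linarith [Nat.ceil_eq_zero.mp h0]
  · rw [Nat.cast_sub hpos, Nat.cast_one]
    linarith [Nat.le_ceil x]

section Monotone

variable {M : Type*} [AddCommMonoid M] [PartialOrder M] [IsOrderedAddMonoid M]
  {f : ℕ → M}

lemma Monotone.sum_range_succ_le_succ_nsmul (hf : Monotone f) (n : ℕ) :
    ∑ j ∈ range (n + 1), f j ≤ (n + 1) • f n := by
  simpa using sum_le_card_nsmul (range (n + 1)) f (f n)
    fun j hj => hf (Nat.lt_succ_iff.mp (mem_range.mp hj))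

lemma Monotone.sub_nsmul_le_sum_range [CanonicallyOrderedAdd M] (hf : Monotone f) (a n : ℕ) :
    (n - a) • f a ≤ ∑ j ∈ range n, f j :=
  calc (n - a) • f a = (Ico a n).card • f a := by rw [Nat.card_Ico]
    _ ≤ ∑ j ∈ Ico a n, f j := card_nsmul_le_sum _ _ _ fun j hj => hf (mem_Ico.mp hj).1
    _ ≤ ∑ j ∈ range n, f j := sum_le_sum_of_subset fun j hj => mem_range.mpr (mem_Ico.mp hj).2

end Monotone

/-- The number of branchings of `Γ_{k,γ}` between the root and generation `j`. -/
noncomputable def branchingsBefore (γ : ℝ) (j : ℕ) : ℕ :=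
  {n : ℕ | 1 ≤ n ∧ ⌊γ ^ n⌋₊ < j}.ncard

/-- The number of vertices of `Γ_{k,γ}` at distance at most `r` from the root. -/
noncomputable def ballCard (γ : ℝ) (k r : ℕ) : ℕ :=
  ∑ j ∈ range (r + 1), k ^ branchingsBefore γ j

section Tree

variable {γ : ℝ} {k : ℕ}

lemma branchingsBefore_eq (hγ : 1 < γ) (j : ℕ) :
    branchingsBefore γ j = ⌈logb γ j⌉₊ - 1 := by
  rw [branchingsBefore, ← ncard_setOf_one_le_and_lt]
  simp_rw [floor_pow_lt_iff_lt_logb hγ]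

lemma logb_natCast_nonneg (hγ : 1 < γ) (j : ℕ) : 0 ≤ logb γ j := by
  rcases j.eq_zero_or_pos with rfl | hj
  · simp
  · exact logb_nonneg hγ (by exact_mod_cast hj)

lemma branchingsBefore_monotone (hγ : 1 < γ) : Monotone (branchingsBefore γ) := by
  intro i j hij
  rw [branchingsBefore_eq hγ, branchingsBefore_eq hγ]
  rcases i.eq_zero_or_pos with rfl | hi
  · simp
  · gcongr

lemma branchingsBefore_le_logb (hγ : 1 < γ) (j : ℕ) :
    (branchingsBefore γ j : ℝ) ≤ logb γ j := by
  rw [branchingsBefore_eq hγ]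
  exact cast_ceil_sub_one_le (logb_natCast_nonneg hγ j)

lemma logb_sub_one_le_branchingsBefore (hγ : 1 < γ) (j : ℕ) :
    logb γ j - 1 ≤ branchingsBefore γ j := by
  rw [branchingsBefore_eq hγ]
  exact sub_one_le_cast_ceil_sub_one _

lemma log_pow_branchingsBefore_le (hγ : 1 < γ) (j : ℕ) :
    log ((k ^ branchingsBefore γ j : ℕ) : ℝ) ≤ logb γ k * log j := by
  rw [Nat.cast_pow, log_pow]
  calc (branchingsBefore γ j : ℝ) * log k ≤ logb γ j * log k :=
        mul_le_mul_of_nonneg_right (branchingsBefore_le_logb hγ j) (log_natCast_nonneg k)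
    _ = logb γ k * log j := by unfold logb; ring

lemma logb_mul_log_sub_le_log_pow_branchingsBefore (hγ : 1 < γ) (j : ℕ) :
    logb γ k * log j - log k ≤ log ((k ^ branchingsBefore γ j : ℕ) : ℝ) := by
  rw [Nat.cast_pow, log_pow]
  calc logb γ k * log j - log k = (logb γ j - 1) * log k := by unfold logb; ring
    _ ≤ (branchingsBefore γ j : ℝ) * log k :=
        mul_le_mul_of_nonneg_right (logb_sub_one_le_branchingsBefore hγ j) (log_natCast_nonneg k)

lemma ballCard_pos (hk : 0 < k) (r : ℕ) : 0 < ballCard γ k r :=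
  sum_pos (fun _ _ => Nat.pow_pos hk) nonempty_range_add_one

lemma pow_branchingsBefore_monotone (hγ : 1 < γ) (hk : 1 ≤ k) :
    Monotone fun j => k ^ branchingsBefore γ j :=
  (pow_right_mono₀ hk).comp (branchingsBefore_monotone hγ)

lemma ballCard_le (hγ : 1 < γ) (hk : 1 ≤ k) (r : ℕ) :
    ballCard γ k r ≤ (r + 1) * k ^ branchingsBefore γ r :=
  (pow_branchingsBefore_monotone hγ hk).sum_range_succ_le_succ_nsmul r

lemma le_ballCard (hγ : 1 < γ) (hk : 1 ≤ k) (r : ℕ) :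
    (r + 1 - (r + 1) / 2) * k ^ branchingsBefore γ ((r + 1) / 2) ≤ ballCard γ k r :=
  (pow_branchingsBefore_monotone hγ hk).sub_nsmul_le_sum_range _ _

lemma logb_self_mul (hγ : 1 < γ) (hk : k ≠ 0) : logb γ (γ * k) = 1 + logb γ k := by
  rw [logb_mul (by positivity) (by exact_mod_cast hk), logb_self_eq_one hγ]

lemma log_ballCard_le (hγ : 1 < γ) (hk : 1 ≤ k) {r : ℕ} (hr : 1 ≤ r) :
    log (ballCard γ k r) ≤ logb γ (γ * k) * log r + log 2 := by
  have hr' : (1 : ℝ) ≤ r := by exact_mod_cast hr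
  have hpow : (0 : ℝ) < ((k ^ branchingsBefore γ r : ℕ) : ℝ) := by
    exact_mod_cast Nat.pow_pos hk
  calc log (ballCard γ k r)
      ≤ log (((r + 1) * k ^ branchingsBefore γ r : ℕ) : ℝ) :=
        log_le_log (by exact_mod_cast ballCard_pos hk r) (by exact_mod_cast ballCard_le hγ hk r)
    _ = log ((r : ℝ) + 1) + log ((k ^ branchingsBefore γ r : ℕ) : ℝ) := by
        rw [Nat.cast_mul, log_mul (by positivity) hpow.ne']
        push_cast
        rfl
    _ ≤ log (2 * r) + logb γ k * log r := by
        gcongr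
        · linarith
        · exact log_pow_branchingsBefore_le hγ r
    _ = logb γ (γ * k) * log r + log 2 := by
        rw [log_mul two_ne_zero (by positivity), logb_self_mul hγ (by omega)]
        ring

lemma sub_le_log_ballCard (hγ : 1 < γ) (hk : 1 ≤ k) {r : ℕ} (hr : 1 ≤ r) :
    logb γ (γ * k) * log r - (logb γ (γ * k) * log 2 + log k) ≤ log (ballCard γ k r) := by
  set a := (r + 1) / 2
  have hhalf_le_a : (r : ℝ) / 2 ≤ a := by
    rw [div_le_iff₀ two_pos]
    exact_mod_cast (by omega : r ≤ a * 2)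
  have hhalf_le_sub : (r : ℝ) / 2 ≤ ((r + 1 - a : ℕ) : ℝ) := by
    rw [div_le_iff₀ two_pos]
    exact_mod_cast (by omega : r ≤ (r + 1 - a) * 2)
  have hhalf : (0 : ℝ) < r / 2 := by positivity
  have hsub : (0 : ℝ) < ((r + 1 - a : ℕ) : ℝ) := hhalf.trans_le hhalf_le_sub
  have hpow : (0 : ℝ) < ((k ^ branchingsBefore γ a : ℕ) : ℝ) := by
    exact_mod_cast Nat.pow_pos hk
  calc logb γ (γ * k) * log r - (logb γ (γ * k) * log 2 + log k)
      = log (r / 2) + (logb γ k * log (r / 2) - log k) := by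
        rw [log_div (by positivity) two_ne_zero, logb_self_mul hγ (by omega)]
        ring
    _ ≤ log ((r + 1 - a : ℕ) : ℝ) + (logb γ k * log a - log k) := by
        gcongr
        exact logb_natCast_nonneg hγ k
    _ ≤ log ((r + 1 - a : ℕ) : ℝ) + log ((k ^ branchingsBefore γ a : ℕ) : ℝ) := by
        gcongr
        exact logb_mul_log_sub_le_log_pow_branchingsBefore hγ a
    _ = log (((r + 1 - a) * k ^ branchingsBefore γ a : ℕ) : ℝ) := by
        rw [Nat.cast_mul, log_mul hsub.ne' hpow.ne']
    _ ≤ log (ballCard γ k r) :=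
        log_le_log (by rw [Nat.cast_mul]; exact mul_pos hsub hpow)
          (by exact_mod_cast le_ballCard hγ hk r)

lemma abs_log_ballCard_sub_le (hγ : 1 < γ) (hk : 1 ≤ k) {r : ℕ} (hr : 1 ≤ r) :
    |log (ballCard γ k r) - logb γ (γ * k) * log r| ≤ logb γ (γ * k) * log 2 + log k := by
  have hlog2 : log 2 ≤ logb γ (γ * k) * log 2 + log k := by
    rw [logb_self_mul hγ (by omega)]
    nlinarith [logb_natCast_nonneg hγ k, log_natCast_nonneg k, log_nonneg one_le_two]
  rw [abs_le]
  constructor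
  · linarith [sub_le_log_ballCard hγ hk hr]
  · linarith [log_ballCard_le hγ hk hr]

end Tree

/-- Proposition: dimension of the tree `Γ_{k,γ}`: with `N(r)` the number of
vertices at distance at most `r` from the root of the SH rooted tree with branchings of size
`k` at the generations `⌊γ^n⌋`, `n ≥ 1`, the limit of `log(N(r))/log(r)` exists and equals
`log(γk)/log(γ)`. -/
theorem dimension_of_gamma_k_tree
    (γ : ℝ) (hγ : 1 < γ) (k : ℕ) (hk : 2 ≤ k)
    (N : ℕ → ℕ)
    (hN : ∀ r : ℕ, N r = ∑ j ∈ Finset.range (r + 1),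
      k ^ ({n : ℕ | 1 ≤ n ∧ Nat.floor (γ ^ n) < j}.ncard)) :
    Tendsto (fun r : ℕ => Real.log (N r) / Real.log r) atTop
      (nhds (Real.log (γ * k) / Real.log γ)) := by
  rw [log_div_log]
  apply tendsto_div_log_of_abs_sub_mul_log_le
  filter_upwards [eventually_ge_atTop 1] with r hr
  rw [hN r]
  exact abs_log_ballCard_sub_le hγ (by omega) hr
end

section
/- Let A, B, C be real numbers with A > 0 and A² − B² − C² = 1 (so that A ≥ 1 and A + B·cos(2θ) + C·sin(2θ) ≥ A − √(A² − 1) > 0 for all θ). Then (1/(2π)) ∫₀^{2π} log(A + B·cos(2θ) + C·sin(2θ)) dθ = log((A + 1)/2). -/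
/-!
On the unit circle `A + B cos φ + C sin φ = (A + 1) / 2 · |e^{iφ} - a|²` with
`a = -(B + C i) / (A + 1)`, and `|a| < 1` because `|B + C i|² = A² - 1 < (A + 1)²`.
The circle average of `log |z - a|` is `log⁺ |a| = 0`, and substituting `z ↦ z²`
(i.e. `φ = 2θ`) does not change a circle average.
-/

open Real MeasureTheory

theorem Function.Periodic.intervalIntegral_comp_natCast_mul {E : Type*} [NormedAddCommGroup E]
    [NormedSpace ℝ E] {f : ℝ → E} {T : ℝ} (hf : f.Periodic T)
    (h_int : IntervalIntegrable f volume 0 T) {n : ℕ} (hn : n ≠ 0) :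
    ∫ x in 0..T, f (n * x) = ∫ x in 0..T, f x := by
  rcases eq_or_ne T 0 with rfl | hT
  · simp
  have hn' : (n : ℝ) ≠ 0 := Nat.cast_ne_zero.2 hn
  have h_sum := hf.intervalIntegral_add_zsmul_eq n 0 (hf.intervalIntegrable₀ hT h_int)
  rw [zero_add, zero_add, natCast_zsmul, nsmul_eq_mul] at h_sum
  rw [intervalIntegral.integral_comp_mul_left _ hn', mul_zero, h_sum, natCast_zsmul,
    ← Nat.cast_smul_eq_nsmul ℝ, smul_smul, inv_mul_cancel₀ hn', one_smul]

theorem circleAverage_comp_pow {E : Type*} [NormedAddCommGroup E] [NormedSpace ℝ E] {f : ℂ → E}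
    {R : ℝ} {n : ℕ} (hf : CircleIntegrable f 0 (R ^ n)) (hn : n ≠ 0) :
    circleAverage (fun z ↦ f (z ^ n)) 0 R = circleAverage f 0 (R ^ n) := by
  simp only [circleAverage_def, circleMap_zero_pow]
  congr 1
  exact (periodic_circleMap 0 (R ^ n)).comp f |>.intervalIntegral_comp_natCast_mul hf hn

open Complex in
theorem add_mul_cos_add_mul_sin_eq_mul_norm_sq {A B C : ℝ} (h : A ^ 2 - B ^ 2 - C ^ 2 = 1)
    (hA : A + 1 ≠ 0) (φ : ℝ) :
    A + B * Real.cos φ + C * Real.sin φ =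
      (A + 1) / 2 * ‖circleMap 0 1 φ - -(B + C * I) / (A + 1)‖ ^ 2 := by
  rw [show (A : ℂ) + 1 = ((A + 1 : ℝ) : ℂ) by push_cast; rfl, ← normSq_eq_norm_sq, normSq_apply]
  simp only [sub_re, sub_im, neg_re, neg_im, div_ofReal_re, div_ofReal_im, add_re, add_im,
    mul_re, mul_im, ofReal_re, ofReal_im, I_re, I_im, circleMap_zero_re, circleMap_zero_im]
  field_simp
  linear_combination h - (1 + A) ^ 2 * Real.sin_sq_add_cos_sq φ

/-- the averaging identity behind equation (4.17) of Breuer: if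
`A² - B² - C² = 1` with `A > 0`, then
`(1/(2π)) ∫₀^{2π} log(A + B cos(2θ) + C sin(2θ)) dθ = log((A+1)/2)`. -/
theorem average_log_of_unimodular_quadratic
    (A B C : ℝ) (hA : 0 < A) (h : A ^ 2 - B ^ 2 - C ^ 2 = 1) :
    (1 / (2 * Real.pi)) *
        ∫ θ in (0 : ℝ)..(2 * Real.pi),
          Real.log (A + B * Real.cos (2 * θ) + C * Real.sin (2 * θ)) =
      Real.log ((A + 1) / 2) := by
  have hA₁ : 0 < A + 1 := by linarith
  set a : ℂ := -(B + C * Complex.I) / (A + 1)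
  have ha : ‖a‖ < 1 := by
    rw [norm_div, norm_neg, Complex.norm_add_mul_I, ← Complex.ofReal_one, ← Complex.ofReal_add,
      Complex.norm_of_nonneg hA₁.le, div_lt_one hA₁, Real.sqrt_lt' hA₁]
    nlinarith
  have h_quad (φ : ℝ) : A + B * Real.cos φ + C * Real.sin φ =
      (A + 1) / 2 * ‖circleMap 0 1 φ - a‖ ^ 2 :=
    add_mul_cos_add_mul_sin_eq_mul_norm_sq h hA₁.ne' φ
  have h_log (θ : ℝ) : Real.log (A + B * Real.cos (2 * θ) + C * Real.sin (2 * θ)) =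
      Real.log ((A + 1) / 2) + 2 * Real.log ‖circleMap 0 1 θ ^ 2 - a‖ := by
    have hne : ‖circleMap 0 1 (2 * θ) - a‖ ≠ 0 := by
      have := norm_sub_norm_le (circleMap 0 1 (2 * θ)) a
      rw [norm_circleMap_zero, abs_one] at this
      linarith
    rw [circleMap_zero_pow, one_pow, Nat.cast_ofNat, h_quad,
      Real.log_mul (by positivity) (pow_ne_zero 2 hne), Real.log_pow, Nat.cast_ofNat]
  calc (1 / (2 * π)) * ∫ θ in (0 : ℝ)..(2 * π),
          Real.log (A + B * Real.cos (2 * θ) + C * Real.sin (2 * θ))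
      = circleAverage (fun z ↦ Real.log ((A + 1) / 2) + 2 * Real.log ‖z ^ 2 - a‖) 0 1 := by
        simp_rw [h_log, circleAverage_def, smul_eq_mul, one_div]
    _ = circleAverage (fun z ↦ Real.log ((A + 1) / 2) + 2 * Real.log ‖z - a‖) 0 1 := by
        rw [circleAverage_comp_pow (f := fun z ↦ Real.log ((A + 1) / 2) + 2 * Real.log ‖z - a‖)
          (by fun_prop) two_ne_zero, one_pow]
    _ = Real.log ((A + 1) / 2) := by
        rw [circleAverage_fun_add (by fun_prop) (by fun_prop)]
        simp_rw [circleAverage_const, ← smul_eq_mul (a := (2 : ℝ))]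
        rw [circleAverage_fun_smul, circleAverage_log_norm_sub_const₀ ha, smul_zero, add_zero]
end

section
/- Let a : ℕ → ℝ with a(j) > 0 for all j ≥ 1 and b : ℕ → ℝ be Jacobi parameters, and fix E ∈ ℝ. If Σ_{j : det(T_j(E)) = 1} ‖T_j(E)‖^{−2} = ∞ (the sum extending over those j ≥ 1 for which the transfer matrix T_j(E) has determinant 1), then every square-summable solution u of the eigenvalue equation at E (with any value of u(0)) is identically zero; in particular, E is not an eigenvalue of the Jacobi matrix J(a,b). -/
open MeasureTheory Filter
open scoped Classical

/-- The one-step transfer matrix `S_j(E)`. -/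
noncomputable def Smat (a b : ℕ → ℝ) (E : ℝ) (j : ℕ) : Matrix (Fin 2) (Fin 2) ℝ :=
  !![(E - b j) / a j, -(a (j - 1)) / a j; 1, 0]

/-- The transfer matrix `T_j(E) = S_j(E) ⋯ S_1(E)` (with `T_0(E) = 1`). -/
noncomputable def Tmat (a b : ℕ → ℝ) (E : ℝ) : ℕ → Matrix (Fin 2) (Fin 2) ℝ
  | 0 => 1
  | (j + 1) => Smat a b E (j + 1) * Tmat a b E j

/-- The operator norm of a real 2×2 matrix. -/
noncomputable def matOpNorm (M : Matrix (Fin 2) (Fin 2) ℝ) : ℝ :=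
  ‖Matrix.toEuclideanCLM (𝕜 := ℝ) M‖

/-- `u` is a solution of the eigenvalue equation
`a(j)u(j+1) + a(j-1)u(j-1) + b(j)u(j) = E u(j)` for all `j ≥ 1`. -/
def IsSolution (a b : ℕ → ℝ) (E : ℝ) (u : ℕ → ℝ) : Prop :=
  ∀ j : ℕ, 1 ≤ j → a j * u (j + 1) + a (j - 1) * u (j - 1) + b j * u j = E * u j

/-!
If the initial vector `v = (u 1, u 0)` of a solution is nonzero, then whenever `det T_j = 1` the
vector `T_j v = (u (j+1), u j)` has length at least `‖v‖ / ‖T_j‖`, because a unimodular `2 × 2`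
matrix and its inverse have the same norm. Summing, `Σ ‖T_j‖⁻²` is dominated by
`‖v‖⁻² Σ (u (j+1)² + u j²) < ∞`. Hence `v = 0`, and then `u = 0` by the recurrence.
-/

open Matrix WithLp

lemma norm_toLp_sq_fin_two (v : Fin 2 → ℝ) : ‖toLp 2 v‖ ^ 2 = v 0 ^ 2 + v 1 ^ 2 := by
  simp [EuclideanSpace.real_norm_sq_eq, Fin.sum_univ_two]

lemma norm_toLp_mulVec_le (M : Matrix (Fin 2) (Fin 2) ℝ) (v : Fin 2 → ℝ) :
    ‖toLp 2 (M *ᵥ v)‖ ≤ matOpNorm M * ‖toLp 2 v‖ :=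
  (toEuclideanCLM (𝕜 := ℝ) M).le_opNorm (toLp 2 v)

def wedge (x y : Fin 2 → ℝ) : ℝ := x 0 * y 1 - x 1 * y 0

lemma wedge_mulVec (M : Matrix (Fin 2) (Fin 2) ℝ) (x y : Fin 2 → ℝ) :
    wedge (M *ᵥ x) (M *ᵥ y) = M.det * wedge x y := by
  simp only [wedge, det_fin_two, mulVec, dotProduct, Fin.sum_univ_two]
  ring

lemma abs_wedge_le (x y : Fin 2 → ℝ) : |wedge x y| ≤ ‖toLp 2 x‖ * ‖toLp 2 y‖ := by
  refine abs_le_of_sq_le_sq ?_ (by positivity)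
  rw [mul_pow, norm_toLp_sq_fin_two, norm_toLp_sq_fin_two, wedge]
  nlinarith [sq_nonneg (x 0 * y 0 + x 1 * y 1)]

-- With `w` the rotation of `v` by a right angle, `‖v‖² = v ∧ w = Mv ∧ Mw ≤ ‖Mv‖ ‖M‖ ‖w‖`.
lemma norm_toLp_le_matOpNorm_mul_of_det_eq_one {M : Matrix (Fin 2) (Fin 2) ℝ} (hM : M.det = 1)
    (v : Fin 2 → ℝ) : ‖toLp 2 v‖ ≤ matOpNorm M * ‖toLp 2 (M *ᵥ v)‖ := by
  set w : Fin 2 → ℝ := ![-v 1, v 0]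
  have hw : ‖toLp 2 w‖ = ‖toLp 2 v‖ := by
    rw [← sq_eq_sq₀ (norm_nonneg _) (norm_nonneg _), norm_toLp_sq_fin_two, norm_toLp_sq_fin_two]
    change (-v 1) ^ 2 + v 0 ^ 2 = v 0 ^ 2 + v 1 ^ 2
    ring
  have hvw : wedge v w = ‖toLp 2 v‖ ^ 2 := by
    rw [norm_toLp_sq_fin_two]
    change v 0 * v 0 - v 1 * -v 1 = v 0 ^ 2 + v 1 ^ 2
    ring
  rcases (norm_nonneg (toLp 2 v)).eq_or_lt with hv | hv
  · rw [← hv]; exact mul_nonneg (norm_nonneg _) (norm_nonneg _)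
  refine le_of_mul_le_mul_right ?_ hv
  calc ‖toLp 2 v‖ * ‖toLp 2 v‖ = |wedge (M *ᵥ v) (M *ᵥ w)| := by
        rw [wedge_mulVec, hM, one_mul, hvw, abs_of_nonneg (by positivity), sq]
    _ ≤ ‖toLp 2 (M *ᵥ v)‖ * (matOpNorm M * ‖toLp 2 w‖) :=
        (abs_wedge_le _ _).trans (by gcongr; exact norm_toLp_mulVec_le M w)
    _ = matOpNorm M * ‖toLp 2 (M *ᵥ v)‖ * ‖toLp 2 v‖ := by rw [hw]; ring

lemma one_div_matOpNorm_sq_le_of_det_eq_one {M : Matrix (Fin 2) (Fin 2) ℝ} (hM : M.det = 1)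
    {v : Fin 2 → ℝ} (hv : v ≠ 0) :
    1 / matOpNorm M ^ 2 ≤ ‖toLp 2 (M *ᵥ v)‖ ^ 2 / ‖toLp 2 v‖ ^ 2 := by
  have hle := norm_toLp_le_matOpNorm_mul_of_det_eq_one hM v
  have hv_pos : 0 < ‖toLp 2 v‖ := norm_pos_iff.2 (by simpa using hv)
  have hM_pos : 0 < matOpNorm M := pos_of_mul_pos_left (hv_pos.trans_le hle) (norm_nonneg _)
  rw [div_le_div_iff₀ (by positivity) (by positivity), one_mul, ← mul_pow]
  exact pow_le_pow_left₀ hv_pos.le (hle.trans_eq (mul_comm _ _)) 2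

lemma Smat_mulVec {a b : ℕ → ℝ} {E : ℝ} {u : ℕ → ℝ} (hsol : IsSolution a b E u) {j : ℕ}
    (hj : 1 ≤ j) (ha : a j ≠ 0) :
    Smat a b E j *ᵥ ![u j, u (j - 1)] = ![u (j + 1), u j] := by
  have hrec := hsol j hj
  ext i
  fin_cases i
  · simp only [mulVec, dotProduct, Smat, Fin.zero_eta, Fin.isValue, of_apply, cons_val',
      cons_val_fin_one, cons_val_zero, Fin.sum_univ_two, cons_val_one]
    field_simp
    linarith
  · simp [Smat, mulVec, dotProduct]

lemma Tmat_mulVec {a b : ℕ → ℝ} (hapos : ∀ j, 1 ≤ j → 0 < a j) {E : ℝ} {u : ℕ → ℝ}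
    (hsol : IsSolution a b E u) (j : ℕ) :
    Tmat a b E j *ᵥ ![u 1, u 0] = ![u (j + 1), u j] := by
  induction j with
  | zero => simp [Tmat]
  | succ j ih =>
    rw [Tmat, ← mulVec_mulVec, ih]
    exact Smat_mulVec hsol (by omega) (hapos (j + 1) (by omega)).ne'

theorem no_square_summable_solution_of_divergent_transfer_sum_general
    (a b : ℕ → ℝ) (hapos : ∀ j, 1 ≤ j → 0 < a j)
    (E : ℝ)
    (hdiv : ¬ Summable fun j : ℕ =>
      if (Tmat a b E (j + 1)).det = 1 then 1 / matOpNorm (Tmat a b E (j + 1)) ^ 2 else 0) :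
    ∀ u : ℕ → ℝ, IsSolution a b E u → (Summable fun j : ℕ => u (j + 1) ^ 2) →
      ∀ j, u j = 0 := by
  intro u hsol hsum
  have hT := Tmat_mulVec hapos hsol
  set v : Fin 2 → ℝ := ![u 1, u 0]
  suffices hv : v = 0 by
    intro j
    simpa [hv] using (congrFun (hT j) 1).symm
  by_contra hv
  have hbound : Summable fun j : ℕ => ‖toLp 2 ![u (j + 2), u (j + 1)]‖ ^ 2 / ‖toLp 2 v‖ ^ 2 := by
    simp only [norm_toLp_sq_fin_two]
    exact (((summable_nat_add_iff 1).2 hsum).add hsum).div_const _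
  refine hdiv (hbound.of_nonneg_of_le (fun j => by split_ifs <;> positivity) fun j => ?_)
  split_ifs with hdet
  · simpa [hT] using one_div_matOpNorm_sq_le_of_det_eq_one hdet hv
  · positivity

/-- Proposition B.6 of Breuer, after Simon–Stolz: if
`Σ_{j : det T_j(E) = 1} ‖T_j(E)‖⁻² = ∞`, then every square-summable solution of the
eigenvalue equation at `E` vanishes identically; in particular `E` is not an eigenvalue
of `J(a,b)`. -/
theorem no_square_summable_solution_of_divergent_transfer_sum
    (a b : ℕ → ℝ) (ha0 : a 0 = 1) (hapos : ∀ j, 1 ≤ j → 0 < a j)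
    (E : ℝ)
    (hdiv : ¬ Summable fun j : ℕ =>
      if (Tmat a b E (j + 1)).det = 1 then 1 / matOpNorm (Tmat a b E (j + 1)) ^ 2 else 0) :
    ∀ u : ℕ → ℝ, IsSolution a b E u → (Summable fun j : ℕ => u (j + 1) ^ 2) →
      ∀ j, u j = 0 :=
  no_square_summable_solution_of_divergent_transfer_sum_general a b hapos E hdiv
end
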